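/- arXiv:0904.0859 — 9 statements merged into one kernel-verified Lean document; each statement's English description precedes it below -/
import Mathlib

section
/- If a nonnegative real vector x satisfies α·x ≥ 1 where α is a nonnegative coefficient vector, then the vector whose j-th coordinate is ⌊ρ·x_j⌋ with ρ = 1 + Σ_i α_i also satisfies α·⌊ρx⌋ ≥ 1. -/
/-!
Rounding down costs each coordinate less than `1`, so `α · ⌊ρx⌋ > ρ (α · x) - Σ αᵢ`.
For `ρ = 1 + Σ αᵢ` and `α · x ≥ 1` the right-hand side is at least `ρ - (ρ - 1) = 1`.
-/

open Finset

section

variable {ι K : Type*} [CommRing K] [LinearOrder K] [IsStrictOrderedRing K] [FloorRing K]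

theorem mul_sum_mul_sub_sum_le_sum_mul_floor (s : Finset ι) (α x : ι → K)
    (hα : ∀ i ∈ s, 0 ≤ α i) (ρ : K) :
    ρ * ∑ i ∈ s, α i * x i - ∑ i ∈ s, α i ≤ ∑ i ∈ s, α i * (⌊ρ * x i⌋ : K) := by
  rw [mul_sum, ← sum_sub_distrib]
  refine sum_le_sum fun i hi => ?_
  calc ρ * (α i * x i) - α i = α i * (ρ * x i - 1) := by ring
    _ ≤ α i * (⌊ρ * x i⌋ : K) := mul_le_mul_of_nonneg_left (Int.sub_one_lt_floor _).le (hα i hi)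

theorem one_le_sum_mul_floor_one_add_sum_mul (s : Finset ι) (α x : ι → K)
    (hα : ∀ i ∈ s, 0 ≤ α i) (h : 1 ≤ ∑ i ∈ s, α i * x i) :
    1 ≤ ∑ i ∈ s, α i * (⌊(1 + ∑ j ∈ s, α j) * x i⌋ : K) := by
  have hρ : 0 ≤ ∑ j ∈ s, α j := sum_nonneg hα
  calc (1 : K) ≤ (1 + ∑ j ∈ s, α j) * ∑ i ∈ s, α i * x i - ∑ j ∈ s, α j := by nlinarith
    _ ≤ _ := mul_sum_mul_sub_sum_le_sum_mul_floor s α x hα _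

end

theorem stmt_0_general (n : ℕ) (α x : Fin n → ℝ)
    (hα : ∀ i, 0 ≤ α i)
    (h : 1 ≤ ∑ i, α i * x i) :
    1 ≤ ∑ i, α i * (⌊(1 + ∑ j, α j) * x i⌋ : ℝ) :=
  one_le_sum_mul_floor_one_add_sum_mul univ α x (fun i _ => hα i) h

theorem stmt_0 (n : ℕ) (α x : Fin n → ℝ)
    (hα : ∀ i, 0 ≤ α i) (hx : ∀ i, 0 ≤ x i)
    (h : 1 ≤ ∑ i, α i * x i) :
    1 ≤ ∑ i, α i * (⌊(1 + ∑ j, α j) * x i⌋ : ℝ) :=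
  stmt_0_general n α x hα h
end

section
/- For any positive integers k and v, the constraint x_1 + x_2 + ... + x_{k-1} + (1/v)·x_k ≥ 1 is k-roundable: for every nonnegative real vector x ∈ ℝ_{≥0}^k, if Σ_{i=1}^{k-1} x_i + (1/v)x_k ≥ 1 then Σ_{i=1}^{k-1} ⌊k·x_i⌋ + (1/v)⌊k·x_k⌋ ≥ 1. -/
/-!
Write `N = ∑_{i<k} ⌊k xᵢ⌋` and `M = ⌊k x_k⌋`. Since `⌊y⌋ > y - 1`, scaling the constraint by `k`
gives `N + M / v > k - (k - 1) - 1 / v = 1 - 1 / v`, that is `v N + M > v - 1`. As `v N + M` is an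
integer, `v N + M ≥ v`, i.e. `N + M / v ≥ 1`.
-/

open Finset

theorem sub_card_le_sum_floor_mul {ι : Type*} (s : Finset ι) (c : ℝ) (x : ι → ℝ) :
    c * ∑ i ∈ s, x i - #s ≤ ∑ i ∈ s, (⌊c * x i⌋ : ℝ) :=
  calc c * ∑ i ∈ s, x i - #s = ∑ i ∈ s, (c * x i - 1) := by
        simp [mul_sum, sum_sub_distrib]
    _ ≤ ∑ i ∈ s, (⌊c * x i⌋ : ℝ) := sum_le_sum fun i _ ↦ (Int.sub_one_lt_floor _).le

theorem one_le_add_one_div_mul_of_lt {v : ℕ} (hv : 0 < v) {N M : ℤ}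
    (h : 1 - 1 / (v : ℝ) < N + 1 / (v : ℝ) * M) : 1 ≤ (N : ℝ) + 1 / (v : ℝ) * M := by
  have hvR : (0 : ℝ) < v := by exact_mod_cast hv
  have hreal : (v : ℝ) - 1 < v * N + M := by
    have := mul_lt_mul_of_pos_left h hvR
    field_simp at this
    linarith
  have hint : (v : ℤ) ≤ v * N + M := by
    have : (v : ℤ) - 1 < v * N + M := by exact_mod_cast hreal
    omega
  have hsum : (N : ℝ) + 1 / v * M = (v * N + M) / v := by field_simp
  rw [hsum, one_le_div hvR]
  exact_mod_cast hint

theorem stmt_1_general (k v : ℕ) (hk : 0 < k) (hv : 0 < v) (x : ℕ → ℝ)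
    (h : 1 ≤ ∑ i ∈ Finset.Icc 1 (k - 1), x i + (1 / (v : ℝ)) * x k) :
    1 ≤ ∑ i ∈ Finset.Icc 1 (k - 1), (⌊(k : ℝ) * x i⌋ : ℝ)
        + (1 / (v : ℝ)) * (⌊(k : ℝ) * x k⌋ : ℝ) := by
  have hcard : (#(Icc 1 (k - 1)) : ℝ) = k - 1 := by simp [Nat.cast_sub hk]
  have hfirst := sub_card_le_sum_floor_mul (Icc 1 (k - 1)) k x
  have hlast : 1 / (v : ℝ) * (k * x k - 1) < 1 / (v : ℝ) * ⌊(k : ℝ) * x k⌋ :=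
    mul_lt_mul_of_pos_left (Int.sub_one_lt_floor _) (by positivity)
  have hscaled : (k : ℝ) * 1 ≤ k * (∑ i ∈ Icc 1 (k - 1), x i + 1 / (v : ℝ) * x k) :=
    mul_le_mul_of_nonneg_left h (Nat.cast_nonneg k)
  exact_mod_cast one_le_add_one_div_mul_of_lt hv
    (N := ∑ i ∈ Icc 1 (k - 1), ⌊(k : ℝ) * x i⌋) (M := ⌊(k : ℝ) * x k⌋)
    (by push_cast; linarith)

theorem stmt_1 (k v : ℕ) (hk : 0 < k) (hv : 0 < v) (x : ℕ → ℝ)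
    (hx : ∀ i, 0 ≤ x i)
    (h : 1 ≤ ∑ i ∈ Finset.Icc 1 (k - 1), x i + (1 / (v : ℝ)) * x k) :
    1 ≤ ∑ i ∈ Finset.Icc 1 (k - 1), (⌊(k : ℝ) * x i⌋ : ℝ)
        + (1 / (v : ℝ)) * (⌊(k : ℝ) * x k⌋ : ℝ) :=
  stmt_1_general k v hk hv x h
end

section
/- Let α ∈ (0,1]^k with α_1 ≥ ... ≥ α_k, Σ_i α_i > k−1, let t be the largest index i with α_i = 1 (t = 0 if none), and let v = ⌈1/α_k⌉. Then a nonnegative integer vector x ∈ ℤ_{≥0}^k satisfies α·x ≥ 1 if and only if it satisfies Σ_{i=1}^t x_i + Σ_{i=t+1}^{k−1} ((v−1)/v) x_i + (1/v) x_k ≥ 1. -/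
/-!
Because every `α i ≤ 1` and `∑ α i > k - 1`, any two coefficients sum to more than `1`; as `α` is
nonincreasing, each coefficient but the last then exceeds `1/2`. For such weights a nonnegative
integer vector `x` satisfies `∑ α i x i ≥ 1` exactly when it is nonzero at a coefficient equal to `1`,
or has total at least `2` on the first `k - 1` variables, or is nonzero both there and at the last
one, or has `α_k x_k ≥ 1`, i.e. `x_k ≥ ⌈1 / α_k⌉ = v`. For `v ≥ 2` the coefficients `1`, `(v - 1) / v`,
`1 / v` of the second constraint have the same pairing property and yield the same four conditions.
-/

open Finset

structure PairCovering {ι : Type*} (a : ι → ℝ) (ℓ : ι) : Prop where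
  nonneg : ∀ i, 0 ≤ a i
  le_one : ∀ i, a i ≤ 1
  one_le_two_mul : ∀ i, i ≠ ℓ → 1 ≤ 2 * a i
  one_le_add : ∀ i, i ≠ ℓ → 1 ≤ a i + a ℓ

section Weights

variable {ι : Type*} [Fintype ι]

theorem sum_mul_lt_one_of_sum_le_one {a : ι → ℝ} (h1 : ∀ i, a i ≤ 1) {x : ι → ℕ}
    (hlt : ∀ i, x i ≠ 0 → a i < 1) (hx : ∑ i, x i ≤ 1) : ∑ i, a i * x i < 1 := by
  by_cases hzero : ∀ i, x i = 0
  · simp [hzero]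
  push Not at hzero
  obtain ⟨j, hj⟩ := hzero
  have hle : ∀ i ∈ univ, a i * x i ≤ (x i : ℝ) := fun i _ =>
    mul_le_of_le_one_left (Nat.cast_nonneg _) (h1 i)
  have hltj : a j * x j < (x j : ℝ) :=
    mul_lt_of_lt_one_left (Nat.cast_pos.2 (Nat.pos_of_ne_zero hj)) (hlt j hj)
  calc ∑ i, a i * x i < ∑ i, (x i : ℝ) := sum_lt_sum hle ⟨j, mem_univ j, hltj⟩
    _ ≤ 1 := by exact_mod_cast hx

variable [DecidableEq ι]

theorem one_lt_add_of_card_sub_one_lt_sum {a : ι → ℝ} (h1 : ∀ i, a i ≤ 1)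
    (hsum : (Fintype.card ι : ℝ) - 1 < ∑ i, a i) {i j : ι} (hij : i ≠ j) : 1 < a i + a j := by
  have hpair : ∑ l ∈ {i, j}, (1 - a l) ≤ ∑ l, (1 - a l) :=
    sum_le_sum_of_subset_of_nonneg (subset_univ _) fun l _ _ => sub_nonneg.2 (h1 l)
  simp only [sum_pair hij, sum_sub_distrib, sum_const, card_univ, nsmul_eq_mul, mul_one] at hpair
  linarith

namespace PairCovering

variable {a : ι → ℝ} {ℓ : ι}

theorem of_card_sub_one_lt_sum (h0 : ∀ i, 0 ≤ a i) (h1 : ∀ i, a i ≤ 1)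
    (hsum : (Fintype.card ι : ℝ) - 1 < ∑ i, a i) (hmin : ∀ i, a ℓ ≤ a i) :
    PairCovering a ℓ where
  nonneg := h0
  le_one := h1
  one_le_two_mul i hi := by linarith [hmin i, one_lt_add_of_card_sub_one_lt_sum h1 hsum hi]
  one_le_add i hi := (one_lt_add_of_card_sub_one_lt_sum h1 hsum hi).le

theorem one_le_sum_mul_iff (h : PairCovering a ℓ) (x : ι → ℕ) :
    1 ≤ ∑ i, a i * x i ↔
      (∃ i ≠ ℓ, a i = 1 ∧ x i ≠ 0) ∨ 2 ≤ ∑ i ∈ univ.erase ℓ, x i ∨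
        ((∃ i ≠ ℓ, x i ≠ 0) ∧ x ℓ ≠ 0) ∨ 1 ≤ a ℓ * x ℓ := by
  have hterm : ∀ i, 0 ≤ a i * x i := fun i => mul_nonneg (h.nonneg i) (Nat.cast_nonneg _)
  have hsingle : ∀ j, a j * x j ≤ ∑ i, a i * x i := fun j =>
    single_le_sum (fun i _ => hterm i) (mem_univ j)
  have hone_le : ∀ i, x i ≠ 0 → a i ≤ a i * x i := fun i hi =>
    le_mul_of_one_le_right (h.nonneg i) (by exact_mod_cast Nat.one_le_iff_ne_zero.2 hi)
  constructor
  · intro hsum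
    by_contra hnot
    push Not at hnot
    obtain ⟨hunit, hrest, hboth, hlast⟩ := hnot
    refine hsum.not_gt ?_
    by_cases hxℓ : x ℓ = 0
    · refine sum_mul_lt_one_of_sum_le_one h.le_one (fun i hi => ?_) ?_
      · have hiℓ : i ≠ ℓ := by rintro rfl; exact hi hxℓ
        exact (h.le_one i).lt_of_ne fun ha => hi (hunit i hiℓ ha)
      · rw [← add_sum_erase _ _ (mem_univ ℓ), hxℓ]
        omega
    · have hzero : ∀ i, i ≠ ℓ → x i = 0 := fun i hi =>
        by_contra fun hxi => hxℓ (hboth ⟨i, hi, hxi⟩)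
      rwa [sum_eq_single ℓ (fun i _ hi => by simp [hzero i hi]) (by simp)]
  · rintro (⟨i, -, hai, hi⟩ | hrest | ⟨⟨i, hiℓ, hi⟩, hℓ⟩ | hlast)
    · exact hai ▸ (hone_le i hi).trans (hsingle i)
    · have hhalf : ∀ i ∈ univ.erase ℓ, (x i : ℝ) / 2 ≤ a i * x i := fun i hi => by
        have := h.one_le_two_mul i (ne_of_mem_erase hi)
        nlinarith [(Nat.cast_nonneg (x i) : (0 : ℝ) ≤ x i)]
      calc (1 : ℝ) ≤ (∑ i ∈ univ.erase ℓ, (x i : ℝ)) / 2 := by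
            rw [le_div_iff₀ two_pos]; exact_mod_cast hrest
        _ = ∑ i ∈ univ.erase ℓ, (x i : ℝ) / 2 := sum_div _ _ _
        _ ≤ ∑ i ∈ univ.erase ℓ, a i * x i := sum_le_sum hhalf
        _ ≤ ∑ i, a i * x i := sum_le_sum_of_subset_of_nonneg (erase_subset _ _)
              fun i _ _ => hterm i
    · calc (1 : ℝ) ≤ a i + a ℓ := h.one_le_add i hiℓ
        _ ≤ a i * x i + a ℓ * x ℓ := add_le_add (hone_le i hi) (hone_le ℓ hℓ)
        _ = ∑ j ∈ {i, ℓ}, a j * x j := (sum_pair (f := fun j => a j * x j) hiℓ).symm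
        _ ≤ ∑ j, a j * x j := sum_le_sum_of_subset_of_nonneg (subset_univ _)
              fun j _ _ => hterm j
    · exact hlast.trans (hsingle ℓ)

theorem one_le_sum_mul_iff_of_pairCovering {b : ι → ℝ} (ha : PairCovering a ℓ)
    (hb : PairCovering b ℓ) (hunit : ∀ i, i ≠ ℓ → (a i = 1 ↔ b i = 1))
    (hlast : ∀ n : ℕ, 1 ≤ a ℓ * n ↔ 1 ≤ b ℓ * n) (x : ι → ℕ) :
    1 ≤ ∑ i, a i * x i ↔ 1 ≤ ∑ i, b i * x i := by
  rw [ha.one_le_sum_mul_iff, hb.one_le_sum_mul_iff, hlast]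
  have hunit' : (∃ i ≠ ℓ, a i = 1 ∧ x i ≠ 0) ↔ ∃ i ≠ ℓ, b i = 1 ∧ x i ≠ 0 :=
    exists_congr fun i => and_congr_right fun hi => and_congr_left' (hunit i hi)
  rw [hunit']

end PairCovering

end Weights

theorem one_le_mul_natCast_iff_ceil_inv_le {a : ℝ} (ha : 0 < a) (n : ℕ) :
    1 ≤ a * n ↔ ⌈1 / a⌉ ≤ n := by
  rw [Int.ceil_le, Int.cast_natCast, div_le_iff₀ ha, mul_comm]

theorem one_lt_ceil_inv {a : ℝ} (ha : 0 < a) (ha1 : a < 1) : 1 < ⌈1 / a⌉ :=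
  Int.lt_ceil.2 (by rw [Int.cast_one, lt_div_iff₀ ha, one_mul]; exact ha1)

theorem Fin.val_lt_sub_one_of_ne {k : ℕ} {i ℓ : Fin k} (hℓ : ℓ.val = k - 1) (hi : i ≠ ℓ) :
    i.val < k - 1 := by
  have := i.isLt; have := Fin.val_ne_of_ne hi; omega

noncomputable def cutCoeff (k t v : ℕ) (i : Fin k) : ℝ :=
  if i.val < t then 1 else if i.val < k - 1 then ((v : ℝ) - 1) / v else 1 / v

theorem cutCoeff_of_val_eq {k t v : ℕ} {ℓ : Fin k} (hℓ : ℓ.val = k - 1) (ht : t ≤ k - 1) :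
    cutCoeff k t v ℓ = 1 / v := by
  rw [cutCoeff, if_neg (by omega), if_neg (by omega)]

theorem cutCoeff_eq_one_iff {k t v : ℕ} (hv : 0 < v) {i : Fin k} (hi : i.val < k - 1) :
    cutCoeff k t v i = 1 ↔ i.val < t := by
  have hvR : (0 : ℝ) < v := by exact_mod_cast hv
  unfold cutCoeff
  split_ifs with hit
  · simp [hit]
  · simp only [hit, iff_false, div_eq_one_iff_eq hvR.ne']
    linarith

theorem cutCoeff_pairCovering {k t v : ℕ} (hv : 2 ≤ v) {ℓ : Fin k} (hℓ : ℓ.val = k - 1)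
    (ht : t ≤ k - 1) : PairCovering (cutCoeff k t v) ℓ := by
  have hv' : (2 : ℝ) ≤ v := by exact_mod_cast hv
  have hvpos : (0 : ℝ) < v := by linarith
  have hmid0 : 0 ≤ ((v : ℝ) - 1) / v := div_nonneg (by linarith) hvpos.le
  have hmid1 : ((v : ℝ) - 1) / v ≤ 1 := by rw [div_le_one hvpos]; linarith
  have hmid2 : 1 ≤ 2 * (((v : ℝ) - 1) / v) := by
    rw [mul_div_assoc', le_div_iff₀ hvpos]; linarith
  have hrest : ∀ i, i ≠ ℓ → cutCoeff k t v i = 1 ∨ cutCoeff k t v i = ((v : ℝ) - 1) / v := by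
    intro i hi
    have := Fin.val_lt_sub_one_of_ne hℓ hi
    unfold cutCoeff
    split_ifs <;> simp_all
  refine ⟨fun i => ?_, fun i => ?_, fun i hi => ?_, fun i hi => ?_⟩
  · unfold cutCoeff; split_ifs <;> first | exact zero_le_one | exact hmid0 | positivity
  · unfold cutCoeff; split_ifs
    exacts [le_rfl, hmid1, (div_le_one hvpos).2 (by linarith)]
  · rcases hrest i hi with h | h <;> rw [h] <;> linarith
  · rw [cutCoeff_of_val_eq hℓ ht]
    rcases hrest i hi with h | h <;> rw [h]
    · exact le_add_of_nonneg_right (by positivity)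
    · rw [← add_div, sub_add_cancel, div_self hvpos.ne']

theorem stmt_4 (k : ℕ) (hk : 2 ≤ k) (α : Fin k → ℝ)
    (h0 : ∀ i, 0 < α i) (h1 : ∀ i, α i ≤ 1)
    (hmono : ∀ i j : Fin k, i ≤ j → α j ≤ α i)
    (hsuml : (k : ℝ) - 1 < ∑ i, α i)
    (t : ℕ) (ht : ∀ i : Fin k, α i = 1 ↔ (i : ℕ) < t)
    (v : ℕ) (hv : (v : ℤ) = ⌈1 / α ⟨k - 1, by omega⟩⌉) :
    ∀ x : Fin k → ℕ, (1 ≤ ∑ i, α i * (x i : ℝ)) ↔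
      (1 ≤ ∑ i : Fin k, (if i.val < t then (1 : ℝ)
                 else if i.val < k - 1 then ((v : ℝ) - 1) / (v : ℝ)
                 else 1 / (v : ℝ)) * (x i : ℝ)) := by
  intro x
  change _ ↔ 1 ≤ ∑ i, cutCoeff k t v i * x i
  set ℓ : Fin k := ⟨k - 1, by omega⟩ with hℓ
  have hmin : ∀ i, α ℓ ≤ α i := fun i => hmono i ℓ (Fin.le_def.2 (by simp [hℓ]; omega))
  by_cases hℓ1 : α ℓ = 1
  · have hall : ∀ i, α i = 1 := fun i => le_antisymm (h1 i) (hℓ1 ▸ hmin i)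
    have hcut : ∀ i, cutCoeff k t v i = 1 := fun i => if_pos ((ht i).1 (hall i))
    simp only [hall, hcut]
  have hαℓ : α ℓ < 1 := (h1 ℓ).lt_of_ne hℓ1
  have htℓ : t ≤ k - 1 := not_lt.1 fun h => hℓ1 ((ht ℓ).2 h)
  have hv2 : 2 ≤ v := by have := one_lt_ceil_inv (h0 ℓ) hαℓ; omega
  have hα : PairCovering α ℓ :=
    .of_card_sub_one_lt_sum (fun i => (h0 i).le) h1 (by simpa using hsuml) hmin
  refine hα.one_le_sum_mul_iff_of_pairCovering (cutCoeff_pairCovering hv2 rfl htℓ)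
    (fun i hi => ?_) (fun n => ?_) x
  · rw [ht i, cutCoeff_eq_one_iff (by omega) (Fin.val_lt_sub_one_of_ne rfl hi)]
  · have hvR : (0 : ℝ) < v := by exact_mod_cast (by omega : 0 < v)
    rw [one_le_mul_natCast_iff_ceil_inv_le (h0 ℓ), ← hv, cutCoeff_of_val_eq rfl htℓ,
      one_div_mul_eq_div, one_le_div hvR, Nat.cast_le, Nat.cast_le]
end

section
/- Every constraint α·x ≥ 1 with α ∈ ℝ_{≥0}^n having at most k nonzero coefficients, each at most 1, is ℤ_+-equivalent to a k-roundable constraint: there exists α' ∈ ℝ_{≥0}^n such that (i) for all x ∈ ℤ_{≥0}^n, α·x ≥ 1 ⟺ α'·x ≥ 1, and (ii) for all x ∈ ℝ_{≥0}^n, α'·x ≥ 1 implies α'·⌊kx⌋ ≥ 1. -/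
/-!
Among all `β` with `0 ≤ β ≤ α` that still cover the solutions of `α` in the box `z ≤ ⌈1 / α⌉`,
take one of least total weight `∑ β`. Every integral solution dominates a box solution, so `β`
has the same integral solutions as `α`. Minimality makes each coordinate `j` of the support of `β`
tight: some box solution `z` with `z j ≠ 0` has `β ⬝ᵥ z = 1`. Hence `β ⬝ᵥ (w + 1) ≤ k` for every
integral non-solution `w`: either a tight `z` has two nonzero coordinates, and then
`∑ β ≤ #supp β - 1` because `β ≤ 1`, or every tight `z` lives on one coordinate `j`, and then
`β j * (w j + 1) ≤ β j * z j = 1`. Rounding follows: if `w = ⌊k x⌋` were a non-solution, then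
`k ≤ k * β ⬝ᵥ x < β ⬝ᵥ (w + 1) ≤ k`.
-/

open Finset Filter Topology

namespace CoveringConstraint

variable {ι : Type*} [Fintype ι]

def IsRoundable (k : ℕ) (β : ι → ℝ) : Prop :=
  ∀ x : ι → ℝ, 0 ≤ x → 1 ≤ β ⬝ᵥ x → 1 ≤ β ⬝ᵥ fun i => (⌊(k : ℝ) * x i⌋ : ℝ)

theorem isRoundable_of_dotProduct_add_one_le {k : ℕ} {β : ι → ℝ} (hβ : 0 ≤ β)
    (h : ∀ w : ι → ℕ, β ⬝ᵥ (Nat.cast ∘ w) < 1 → β ⬝ᵥ (Nat.cast ∘ w + 1) ≤ k) :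
    IsRoundable k β := by
  intro x hx hβx
  set w : ι → ℕ := fun i => ⌊(k : ℝ) * x i⌋₊
  have hw : (fun i => (⌊(k : ℝ) * x i⌋ : ℝ)) = Nat.cast ∘ w := by
    funext i
    exact (natCast_floor_eq_intCast_floor (mul_nonneg k.cast_nonneg (hx i))).symm
  rw [hw]
  by_contra! hlt
  obtain ⟨i₀, hi₀⟩ : ∃ i, β i ≠ 0 := by
    by_contra! h0
    norm_num [show β = 0 from funext h0] at hβx
  have hstrict : β ⬝ᵥ ((k : ℝ) • x) < β ⬝ᵥ (Nat.cast ∘ w + 1) := by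
    refine sum_lt_sum (fun i _ => ?_) ⟨i₀, mem_univ _, ?_⟩
    · exact mul_le_mul_of_nonneg_left (Nat.lt_floor_add_one _).le (hβ i)
    · exact mul_lt_mul_of_pos_left (Nat.lt_floor_add_one _) ((hβ i₀).lt_of_ne' hi₀)
  have : (k : ℝ) ≤ k * (β ⬝ᵥ x) := le_mul_of_one_le_right k.cast_nonneg hβx
  rw [dotProduct_smul, smul_eq_mul] at hstrict
  linarith [h w hlt]

theorem dotProduct_natCast_eq_mul_of_forall_ne {z : ι → ℕ} {i : ι} (hz : ∀ l ≠ i, z l = 0)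
    (γ : ι → ℝ) : γ ⬝ᵥ (Nat.cast ∘ z) = γ i * z i :=
  sum_eq_single i (fun l _ hl => by simp [hz l hl]) (by simp)

theorem mul_add_one_le_of_forall_ne {α β : ι → ℝ} (hα : 0 ≤ α) {z w : ι → ℕ} {i : ι}
    (hβi : 0 ≤ β i) (hz : ∀ l ≠ i, z l = 0) (hαz : 1 ≤ α ⬝ᵥ (Nat.cast ∘ z))
    (hβz : β ⬝ᵥ (Nat.cast ∘ z) = 1) (hαw : α ⬝ᵥ (Nat.cast ∘ w) < 1) : β i * (w i + 1) ≤ 1 := by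
  rw [dotProduct_natCast_eq_mul_of_forall_ne hz] at hαz hβz
  have hαwi : α i * w i ≤ α ⬝ᵥ (Nat.cast ∘ w) :=
    single_le_sum (f := fun l => α l * (w l : ℝ))
      (fun l _ => mul_nonneg (hα l) (Nat.cast_nonneg _)) (mem_univ i)
  have hwz : w i < z i := by
    by_contra! h
    have : α i * z i ≤ α i * w i := mul_le_mul_of_nonneg_left (Nat.cast_le.2 h) (hα i)
    linarith
  calc β i * (w i + 1) ≤ β i * z i := mul_le_mul_of_nonneg_left (by exact_mod_cast hwz) hβi
    _ = 1 := hβz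

theorem card_support_le_of_nonneg_of_le {α β : ι → ℝ} (hβ0 : 0 ≤ β) (hβα : β ≤ α) :
    #{i | β i ≠ 0} ≤ #{i | α i ≠ 0} :=
  card_le_card fun i hi => mem_filter.2 ⟨mem_univ i,
    fun hαi => (mem_filter.1 hi).2 (le_antisymm (hαi ▸ hβα i) (hβ0 i))⟩

theorem one_le_mul_ceil_inv {a : ℝ} (ha : 0 < a) : 1 ≤ a * ⌈a⁻¹⌉₊ :=
  calc 1 = a * a⁻¹ := (mul_inv_cancel₀ ha.ne').symm
    _ ≤ a * ⌈a⁻¹⌉₊ := mul_le_mul_of_nonneg_left (Nat.le_ceil _) ha.le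

def feasible (u : ι → ℝ) (B : Finset (ι → ℕ)) : Set (ι → ℝ) :=
  {β ∈ Set.Icc 0 u | ∀ z ∈ B, 1 ≤ β ⬝ᵥ (Nat.cast ∘ z)}

theorem isCompact_feasible (u : ι → ℝ) (B : Finset (ι → ℕ)) : IsCompact (feasible u B) := by
  refine isCompact_Icc.of_isClosed_subset ?_ (Set.sep_subset _ _)
  have hB : IsClosed {β : ι → ℝ | ∀ z ∈ B, 1 ≤ β ⬝ᵥ (Nat.cast ∘ z)} := by
    simp only [Set.ofPred_forall]
    exact isClosed_biInter fun z _ =>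
      isClosed_le continuous_const (continuous_id.dotProduct continuous_const)
  exact isClosed_Icc.inter hB

variable [DecidableEq ι]

theorem sum_le_card_support_sub_one {β : ι → ℝ} (hβ0 : 0 ≤ β) (hβ1 : β ≤ 1) {z : ι → ℕ}
    (hz : β ⬝ᵥ (Nat.cast ∘ z) ≤ 1) (hzβ : ∀ i, z i ≠ 0 → β i ≠ 0) (h2 : 2 ≤ #{i | z i ≠ 0}) :
    ∑ i, β i ≤ #{i | β i ≠ 0} - 1 := by
  set S : Finset ι := {i | β i ≠ 0}
  set Z : Finset ι := {i | z i ≠ 0}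
  have hZS : Z ⊆ S := fun i hi => mem_filter.2 ⟨mem_univ i, hzβ i (mem_filter.1 hi).2⟩
  have hout : ∑ i ∈ S \ Z, β i ≤ #(S \ Z) := by
    simpa using sum_le_card_nsmul (S \ Z) β 1 fun i _ => hβ1 i
  have hin : ∑ i ∈ Z, β i ≤ β ⬝ᵥ (Nat.cast ∘ z) :=
    calc ∑ i ∈ Z, β i ≤ ∑ i ∈ Z, β i * z i := sum_le_sum fun i hi =>
          le_mul_of_one_le_right (hβ0 i)
            (by exact_mod_cast Nat.one_le_iff_ne_zero.2 (mem_filter.1 hi).2)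
      _ ≤ ∑ i, β i * z i := sum_le_sum_of_subset_of_nonneg (subset_univ _)
          fun i _ _ => mul_nonneg (hβ0 i) (Nat.cast_nonneg _)
  have hcard : ((#(S \ Z) : ℕ) : ℝ) + #Z = #S := by
    exact_mod_cast card_sdiff_add_card_eq_card hZS
  have h2' : (2 : ℝ) ≤ #Z := by exact_mod_cast h2
  calc ∑ i, β i = ∑ i ∈ S, β i := (sum_filter_ne_zero _).symm
    _ = ∑ i ∈ S \ Z, β i + ∑ i ∈ Z, β i := (sum_sdiff hZS).symm
    _ ≤ #S - 1 := by linarith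

theorem eventually_sub_single_mem_feasible {u β : ι → ℝ} {B : Finset (ι → ℕ)} {j : ι}
    (hβ : β ∈ feasible u B) (hj : 0 < β j)
    (hslack : ∀ z ∈ B, z j ≠ 0 → 1 < β ⬝ᵥ (Nat.cast ∘ z)) :
    ∀ᶠ ε in 𝓝[>] 0, β - Pi.single j ε ∈ feasible u B := by
  obtain ⟨⟨hβ0, hβu⟩, hβB⟩ := hβ
  have hcover : ∀ z ∈ B, ∀ᶠ ε in 𝓝 (0 : ℝ), ε * z j ≤ β ⬝ᵥ (Nat.cast ∘ z) - 1 := by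
    intro z hz
    by_cases hzj : z j = 0
    · exact Eventually.of_forall fun ε => by simpa [hzj] using hβB z hz
    · have hcont : Tendsto (fun ε : ℝ => ε * z j) (𝓝 0) (𝓝 0) := by
        simpa using ((continuous_mul_const (z j : ℝ)).tendsto 0)
      exact hcont.eventually (eventually_le_nhds (sub_pos.2 (hslack z hz hzj)))
  filter_upwards [self_mem_nhdsWithin, nhdsWithin_le_nhds (eventually_le_nhds hj),
    nhdsWithin_le_nhds ((eventually_all_finset B).2 hcover)] with ε (hε : 0 < ε) hεβ hεB
  have hcoord (i : ι) :
      0 ≤ (β - Pi.single j ε : ι → ℝ) i ∧ (β - Pi.single j ε : ι → ℝ) i ≤ u i := by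
    rcases eq_or_ne i j with rfl | hij
    · simp only [Pi.sub_apply, Pi.single_eq_same]
      constructor <;> linarith [hβu i]
    · simpa [hij] using ⟨hβ0 i, hβu i⟩
  refine ⟨⟨fun i => (hcoord i).1, fun i => (hcoord i).2⟩, fun z hz => ?_⟩
  rw [sub_dotProduct, single_dotProduct, Function.comp_apply]
  linarith [hεB z hz]

theorem exists_tight_of_isMinOn {u β : ι → ℝ} {B : Finset (ι → ℕ)} {j : ι}
    (hβ : β ∈ feasible u B) (hmin : IsMinOn (fun γ => ∑ i, γ i) (feasible u B) β)
    (hj : 0 < β j) : ∃ z ∈ B, z j ≠ 0 ∧ β ⬝ᵥ (Nat.cast ∘ z) = 1 := by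
  by_contra! hloose
  have hslack z (hz : z ∈ B) (hzj : z j ≠ 0) : 1 < β ⬝ᵥ (Nat.cast ∘ z) :=
    (hβ.2 z hz).lt_of_ne' (hloose z hz hzj)
  obtain ⟨ε, hmem, hε⟩ := ((eventually_sub_single_mem_feasible hβ hj hslack).and
    self_mem_nhdsWithin).exists
  have := hmin hmem
  simp only [Set.mem_ofPred_eq, Pi.sub_apply, sum_sub_distrib, sum_pi_single', mem_univ,
    ↓reduceIte, le_sub_self_iff] at this hε
  linarith

/-- The junk value `0⁻¹ = 0` makes the box trivial in the coordinates where `α` vanishes. -/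
noncomputable def boxSolutions (α : ι → ℝ) : Finset (ι → ℕ) :=
  {z ∈ Iic fun i => ⌈(α i)⁻¹⌉₊ | 1 ≤ α ⬝ᵥ (Nat.cast ∘ z)}

variable {α β : ι → ℝ}

theorem pos_of_mem_boxSolutions {z : ι → ℕ} (hz : z ∈ boxSolutions α) {i : ι} (hzi : z i ≠ 0) :
    0 < α i := by
  have : z i ≤ ⌈(α i)⁻¹⌉₊ := mem_Iic.1 (mem_filter.1 hz).1 i
  exact inv_pos.1 (Nat.ceil_pos.1 (by omega))

theorem exists_mem_boxSolutions_le (hα : 0 ≤ α) {x : ι → ℕ} (hx : 1 ≤ α ⬝ᵥ (Nat.cast ∘ x)) :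
    ∃ z ∈ boxSolutions α, z ≤ x := by
  set m : ι → ℕ := fun i => ⌈(α i)⁻¹⌉₊
  refine ⟨x ⊓ m, mem_filter.2 ⟨mem_Iic.2 inf_le_right, ?_⟩, inf_le_left⟩
  by_cases hcap : ∃ i, 0 < α i ∧ m i ≤ x i
  · obtain ⟨i, hi, hmi⟩ := hcap
    calc 1 ≤ α i * m i := one_le_mul_ceil_inv hi
      _ = α i * (x ⊓ m) i := by simp [min_eq_right hmi]
      _ ≤ α ⬝ᵥ (Nat.cast ∘ (x ⊓ m)) :=
        single_le_sum (f := fun i => α i * ((x ⊓ m) i : ℝ))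
          (fun i _ => mul_nonneg (hα i) (Nat.cast_nonneg _)) (mem_univ i)
  · push Not at hcap
    refine hx.trans_eq (sum_congr rfl fun i _ => ?_)
    rcases (hα i).eq_or_lt with hi | hi
    · simp [← hi]
    · simp [min_eq_left (hcap i hi).le]

theorem one_le_dotProduct_iff_of_mem_feasible (hα : 0 ≤ α)
    (hβ : β ∈ feasible α (boxSolutions α)) (x : ι → ℕ) :
    1 ≤ α ⬝ᵥ (Nat.cast ∘ x) ↔ 1 ≤ β ⬝ᵥ (Nat.cast ∘ x) := by
  refine ⟨fun hx => ?_, fun hx => ?_⟩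
  · obtain ⟨z, hz, hzx⟩ := exists_mem_boxSolutions_le hα hx
    exact (hβ.2 z hz).trans
      (dotProduct_le_dotProduct_of_nonneg_left (fun i => Nat.cast_le.2 (hzx i)) hβ.1.1)
  · exact hx.trans (dotProduct_le_dotProduct_of_nonneg_right hβ.1.2 fun i => Nat.cast_nonneg _)

theorem pos_of_mem_feasible (hβ : β ∈ feasible α (boxSolutions α)) {i : ι} (hi : 0 < α i) :
    0 < β i := by
  set z : ι → ℕ := Pi.single i ⌈(α i)⁻¹⌉₊
  have hzl : ∀ l ≠ i, z l = 0 := fun l hl => Pi.single_eq_of_ne hl _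
  have hz : z ∈ boxSolutions α := by
    refine mem_filter.2 ⟨mem_Iic.2 fun l => ?_, ?_⟩
    · rcases eq_or_ne l i with rfl | hl
      · simp [z]
      · simp [hzl l hl]
    · rw [dotProduct_natCast_eq_mul_of_forall_ne hzl]
      simpa [z] using one_le_mul_ceil_inv hi
  have := hβ.2 z hz
  rw [dotProduct_natCast_eq_mul_of_forall_ne hzl] at this
  exact pos_of_mul_pos_left (one_pos.trans_le this) (Nat.cast_nonneg _)

theorem self_mem_feasible (hα : 0 ≤ α) : α ∈ feasible α (boxSolutions α) :=
  ⟨⟨hα, le_rfl⟩, fun _ hz => (mem_filter.1 hz).2⟩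

theorem dotProduct_add_one_le_card (hα0 : 0 ≤ α) (hα1 : α ≤ 1)
    (hβ : β ∈ feasible α (boxSolutions α))
    (htight : ∀ j, β j ≠ 0 → ∃ z ∈ boxSolutions α, z j ≠ 0 ∧ β ⬝ᵥ (Nat.cast ∘ z) = 1)
    {w : ι → ℕ} (hw : α ⬝ᵥ (Nat.cast ∘ w) < 1) :
    β ⬝ᵥ (Nat.cast ∘ w + 1) ≤ #{i | β i ≠ 0} := by
  have hβ0 := hβ.1.1
  by_cases hwide : ∃ z ∈ boxSolutions α, β ⬝ᵥ (Nat.cast ∘ z) = 1 ∧ 2 ≤ #{i | z i ≠ 0}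
  · obtain ⟨z, hz, hβz, h2⟩ := hwide
    have hβw : β ⬝ᵥ (Nat.cast ∘ w) ≤ α ⬝ᵥ (Nat.cast ∘ w) :=
      dotProduct_le_dotProduct_of_nonneg_right hβ.1.2 fun i => Nat.cast_nonneg _
    have := sum_le_card_support_sub_one hβ0 (hβ.1.2.trans hα1) hβz.le
      (fun i hzi => (pos_of_mem_feasible hβ (pos_of_mem_boxSolutions hz hzi)).ne') h2
    rw [dotProduct_add, dotProduct_one]
    linarith
  · push Not at hwide
    have hterm : ∀ i ∈ ({i | β i ≠ 0} : Finset ι), β i * (w i + 1) ≤ 1 := by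
      intro i hi
      obtain ⟨z, hz, hzi, hβz⟩ := htight i (mem_filter.1 hi).2
      have hzl : ∀ l ≠ i, z l = 0 := by
        have := card_le_one.1 (Nat.le_of_lt_succ (hwide z hz hβz))
        exact fun l hl => by_contra fun hzl => hl (this l (by simpa) i (by simpa))
      exact mul_add_one_le_of_forall_ne hα0 (hβ0 i) hzl (mem_filter.1 hz).2 hβz hw
    calc β ⬝ᵥ (Nat.cast ∘ w + 1) = ∑ i, β i * (w i + 1) := rfl
      _ = ∑ i ∈ {i | β i ≠ 0}, β i * (w i + 1) :=
          (sum_filter_of_ne fun _ _ => left_ne_zero_of_mul).symm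
      _ ≤ ∑ i ∈ {i | β i ≠ 0}, 1 := sum_le_sum hterm
      _ = #{i | β i ≠ 0} := by simp

end CoveringConstraint

open CoveringConstraint

open Classical in
theorem stmt_6_general (n k : ℕ) (α : Fin n → ℝ)
    (hα0 : ∀ i, 0 ≤ α i) (hα1 : ∀ i, α i ≤ 1)
    (hsparse : (Finset.univ.filter (fun i => α i ≠ 0)).card ≤ k) :
    ∃ α' : Fin n → ℝ, (∀ i, 0 ≤ α' i) ∧
      (∀ x : Fin n → ℕ, (1 ≤ ∑ i, α i * (x i : ℝ)) ↔ (1 ≤ ∑ i, α' i * (x i : ℝ))) ∧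
      (∀ x : Fin n → ℝ, (∀ i, 0 ≤ x i) → 1 ≤ ∑ i, α' i * x i →
        1 ≤ ∑ i, α' i * (⌊(k : ℝ) * x i⌋ : ℝ)) := by
  obtain ⟨β, hβ, hmin⟩ := (isCompact_feasible α (boxSolutions α)).exists_isMinOn
    ⟨α, self_mem_feasible hα0⟩
    (continuous_finsetSum _ fun i _ => continuous_apply i).continuousOn
  have hequiv := one_le_dotProduct_iff_of_mem_feasible hα0 hβ
  have htight j (hj : β j ≠ 0) := exists_tight_of_isMinOn hβ hmin ((hβ.1.1 j).lt_of_ne' hj)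
  refine ⟨β, hβ.1.1, hequiv, isRoundable_of_dotProduct_add_one_le hβ.1.1 fun w hw => ?_⟩
  have hαw : α ⬝ᵥ (Nat.cast ∘ w) < 1 := lt_of_not_ge fun h => hw.not_ge ((hequiv w).1 h)
  calc β ⬝ᵥ (Nat.cast ∘ w + 1) ≤ #{i | β i ≠ 0} := dotProduct_add_one_le_card hα0 hα1 hβ htight hαw
    _ ≤ #{i | α i ≠ 0} := Nat.cast_le.2 (card_support_le_of_nonneg_of_le hβ.1.1 hβ.1.2)
    _ ≤ k := Nat.cast_le.2 hsparse

open Classical in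
theorem stmt_6 (n k : ℕ) (hk : 2 ≤ k) (α : Fin n → ℝ)
    (hα0 : ∀ i, 0 ≤ α i) (hα1 : ∀ i, α i ≤ 1)
    (hsparse : (Finset.univ.filter (fun i => α i ≠ 0)).card ≤ k) :
    ∃ α' : Fin n → ℝ, (∀ i, 0 ≤ α' i) ∧
      (∀ x : Fin n → ℕ, (1 ≤ ∑ i, α i * (x i : ℝ)) ↔ (1 ≤ ∑ i, α' i * (x i : ℝ))) ∧
      (∀ x : Fin n → ℝ, (∀ i, 0 ≤ x i) → 1 ≤ ∑ i, α' i * x i →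
        1 ≤ ∑ i, α' i * (⌊(k : ℝ) * x i⌋ : ℝ)) :=
  stmt_6_general n k α hα0 hα1 hsparse
end

section
/- Suppose every row constraint a_i·x ≥ 1 (with nonnegative coefficients) of an unbounded covering integer program is ρ-roundable, and x* is a nonnegative real vector with A x* ≥ 1 componentwise. Then ⌊ρ x*⌋ is a nonnegative integer vector with A⌊ρ x*⌋ ≥ 1, and c·⌊ρ x*⌋ ≤ ρ (c·x*) for any nonnegative cost vector c. -/
theorem Finset.sum_mul_floor_mul_le {ι : Type*} (s : Finset ι) {c : ι → ℝ}
    (hc : ∀ j ∈ s, 0 ≤ c j) (ρ : ℝ) (x : ι → ℝ) :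
    ∑ j ∈ s, c j * (⌊ρ * x j⌋ : ℝ) ≤ ρ * ∑ j ∈ s, c j * x j := by
  rw [Finset.mul_sum]
  refine Finset.sum_le_sum fun j hj => ?_
  calc c j * (⌊ρ * x j⌋ : ℝ) ≤ c j * (ρ * x j) :=
        mul_le_mul_of_nonneg_left (Int.floor_le _) (hc j hj)
    _ = ρ * (c j * x j) := by ring

theorem stmt_10_general (m n : ℕ) (A : Fin m → Fin n → ℝ) (c xs : Fin n → ℝ) (ρ : ℝ)
    (hc : ∀ j, 0 ≤ c j) (hx : ∀ j, 0 ≤ xs j)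
    (hρ : 1 < ρ)
    (hfeas : ∀ i, 1 ≤ ∑ j, A i j * xs j)
    (hround : ∀ i, ∀ x : Fin n → ℝ, (∀ j, 0 ≤ x j) → 1 ≤ ∑ j, A i j * x j →
      1 ≤ ∑ j, A i j * (⌊ρ * x j⌋ : ℝ)) :
    (∀ j, 0 ≤ ⌊ρ * xs j⌋) ∧
    (∀ i, 1 ≤ ∑ j, A i j * (⌊ρ * xs j⌋ : ℝ)) ∧
    (∑ j, c j * (⌊ρ * xs j⌋ : ℝ)) ≤ ρ * ∑ j, c j * xs j :=
  ⟨fun j => Int.floor_nonneg.2 (mul_nonneg (zero_le_one.trans hρ.le) (hx j)),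
    fun i => hround i xs hx (hfeas i),
    Finset.univ.sum_mul_floor_mul_le (fun j _ => hc j) ρ xs⟩

theorem stmt_10 (m n : ℕ) (A : Fin m → Fin n → ℝ) (c xs : Fin n → ℝ) (ρ : ℝ)
    (hA : ∀ i j, 0 ≤ A i j) (hc : ∀ j, 0 ≤ c j) (hx : ∀ j, 0 ≤ xs j)
    (hρ : 1 < ρ)
    (hfeas : ∀ i, 1 ≤ ∑ j, A i j * xs j)
    (hround : ∀ i, ∀ x : Fin n → ℝ, (∀ j, 0 ≤ x j) → 1 ≤ ∑ j, A i j * x j →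
      1 ≤ ∑ j, A i j * (⌊ρ * x j⌋ : ℝ)) :
    (∀ j, 0 ≤ ⌊ρ * xs j⌋) ∧
    (∀ i, 1 ≤ ∑ j, A i j * (⌊ρ * xs j⌋ : ℝ)) ∧
    (∑ j, c j * (⌊ρ * xs j⌋ : ℝ)) ≤ ρ * ∑ j, c j * xs j :=
  stmt_10_general m n A c xs ρ hc hx hρ hfeas hround
end

section
/- Let a ∈ [0,1]^n be a row with at most k nonzeros that is k-roundable, d ∈ (ℤ_{≥0} ∪ {∞})^n, and x* ∈ ℝ_{≥0}^n with x* ≤ d. Set F = {j ∈ supp(a) : x*_j ≥ d_j/k} and x̂ = min(d, ⌊k x*⌋) componentwise. If F is nonempty, Σ_{j∈F} a_j d_j < 1, and Σ_{j∉F} min(a_j, 1 − Σ_{j'∈F} a_{j'} d_{j'}) x*_j ≥ 1 − Σ_{j∈F} a_j d_j, then a·x̂ ≥ 1. -/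
/-!
On `F` the threshold `m / k ≤ x*_j` gives `⌊k x*_j⌋ ≥ d_j`, so `x̂_j = d_j` and `F` contributes
exactly `D = Σ_{j∈F} a_j d_j`. Off `F`, every `j` in the support has `⌊k x*_j⌋ ≤ d_j`, so
`x̂_j = ⌊k x*_j⌋`. With `β = 1 - D` and `c_j = min(a_j, β)`, each of the at most `k - 1`
support indices outside `F` loses less than `c_j ≤ β` to rounding, so
`Σ_{j∉F} c_j ⌊k x*_j⌋ ≥ k β - (k - 1) β = β`, and `a·x̂ ≥ D + β = 1`.
-/

open Finset

/-- The rounded value `x̂_j = min(d_j, ⌊k x*_j⌋)` of the paper. -/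
noncomputable def clippedFloor (k : ℕ) (d : WithTop ℕ) (x : ℝ) : ℝ :=
  if d = ⊤ then (⌊(k : ℝ) * x⌋ : ℝ) else min ((d.untopD 0 : ℕ) : ℝ) (⌊(k : ℝ) * x⌋ : ℝ)

lemma clippedFloor_of_div_le {k m : ℕ} (hk : 0 < k) {x : ℝ} (h : (m : ℝ) / k ≤ x) :
    clippedFloor k m x = m := by
  have hm : ((m : ℤ) : ℝ) ≤ k * x := by
    rw [div_le_iff₀ (by exact_mod_cast hk)] at h
    push_cast
    linarith
  have hfloor : (m : ℝ) ≤ ⌊(k : ℝ) * x⌋ := by exact_mod_cast Int.le_floor.mpr hm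
  rw [clippedFloor, if_neg (WithTop.natCast_ne_top m)]
  exact min_eq_left hfloor

lemma clippedFloor_of_lt_div {k : ℕ} (hk : 0 < k) {d : WithTop ℕ} {x : ℝ}
    (h : ∀ m : ℕ, d = m → x < (m : ℝ) / k) : clippedFloor k d x = ⌊(k : ℝ) * x⌋ := by
  induction d using WithTop.recTopCoe with
  | top => simp [clippedFloor]
  | coe m =>
    have hkx : (k : ℝ) * x < m := by
      have := h m rfl
      rwa [lt_div_iff₀ (by exact_mod_cast hk), mul_comm] at this
    have hfloor : (⌊(k : ℝ) * x⌋ : ℝ) ≤ m := (Int.floor_le _).trans hkx.le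
    rw [clippedFloor, if_neg WithTop.coe_ne_top]
    exact min_eq_right hfloor

lemma card_add_one_le_of_subset_sdiff {α : Type*} [DecidableEq α] {s t u : Finset α}
    (ht : t ⊆ s \ u) (hu : u ⊆ s) (hu_ne : u.Nonempty) : #t + 1 ≤ #s :=
  (card_le_card ht).trans_lt (card_lt_card (sdiff_ssubset hu hu_ne))

/-- Rounding `k y_j` down costs less than `c_j ≤ β` on each index with `c_j ≠ 0`, so fewer than
`k` such indices lose less than the factor `k` gains. -/
lemma le_sum_mul_floor_of_card_lt {ι : Type*} (s : Finset ι) (c y : ι → ℝ) {β : ℝ} {k : ℕ}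
    (hβ : 0 ≤ β) (hc0 : ∀ j ∈ s, 0 ≤ c j) (hcβ : ∀ j ∈ s, c j ≤ β)
    (hcard : #{j ∈ s | c j ≠ 0} + 1 ≤ k) (hcover : β ≤ ∑ j ∈ s, c j * y j) :
    β ≤ ∑ j ∈ s, c j * ⌊(k : ℝ) * y j⌋ := by
  classical
  have hterm : ∀ j ∈ s, k * (c j * y j) - (if c j ≠ 0 then β else 0)
      ≤ c j * ⌊(k : ℝ) * y j⌋ := by
    intro j hj
    by_cases hcj : c j = 0
    · simp [hcj]
    · have := Int.sub_one_lt_floor ((k : ℝ) * y j)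
      rw [if_pos hcj]
      nlinarith [hc0 j hj, hcβ j hj]
  have hloss : ∑ j ∈ s, (if c j ≠ 0 then β else 0) = #{j ∈ s | c j ≠ 0} * β := by
    rw [← sum_filter, sum_const, nsmul_eq_mul]
  have hcard' : (#{j ∈ s | c j ≠ 0} : ℝ) + 1 ≤ k := by exact_mod_cast hcard
  calc β ≤ k * β - #{j ∈ s | c j ≠ 0} * β := by nlinarith
    _ ≤ k * ∑ j ∈ s, c j * y j - #{j ∈ s | c j ≠ 0} * β := by gcongr
    _ ≤ ∑ j ∈ s, c j * ⌊(k : ℝ) * y j⌋ := by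
      rw [← hloss, mul_sum, ← sum_sub_distrib]
      exact sum_le_sum hterm

open Classical in
theorem stmt_11_general (n k : ℕ) (hk : 0 < k)
    (a : Fin n → ℝ) (ha0 : ∀ j, 0 ≤ a j)
    (hsparse : (Finset.univ.filter (fun j => a j ≠ 0)).card ≤ k)
    (d : Fin n → WithTop ℕ)
    (xs : Fin n → ℝ) (hxs0 : ∀ j, 0 ≤ xs j)
    (F : Finset (Fin n))
    (hF : ∀ j, j ∈ F ↔ (0 < a j ∧ ∃ m : ℕ, d j = (m : WithTop ℕ) ∧ (m : ℝ) / (k : ℝ) ≤ xs j))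
    (hFne : F.Nonempty)
    (hFd : ∑ j ∈ F, a j * (((d j).untopD 0 : ℕ) : ℝ) < 1)
    (hKC : 1 - ∑ j ∈ F, a j * (((d j).untopD 0 : ℕ) : ℝ)
        ≤ ∑ j ∈ Finset.univ \ F,
            min (a j) (1 - ∑ j' ∈ F, a j' * (((d j').untopD 0 : ℕ) : ℝ)) * xs j)
    (xhat : Fin n → ℝ)
    (hxhat : ∀ j, xhat j =
      if d j = ⊤ then (⌊(k : ℝ) * xs j⌋ : ℝ)
      else min (((d j).untopD 0 : ℕ) : ℝ) (⌊(k : ℝ) * xs j⌋ : ℝ)) :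
    1 ≤ ∑ j, a j * xhat j := by
  set D := ∑ j ∈ F, a j * (((d j).untopD 0 : ℕ) : ℝ)
  have hβ : 0 < 1 - D := by linarith
  have hxhat' : ∀ j, xhat j = clippedFloor k (d j) (xs j) := hxhat
  have hsumF : ∑ j ∈ F, a j * xhat j = D := by
    refine sum_congr rfl fun j hj => ?_
    obtain ⟨-, m, hdm, hmx⟩ := (hF j).1 hj
    rw [hxhat', hdm, clippedFloor_of_div_le hk hmx]
    rfl
  have hoff : ∀ j ∈ univ \ F, min (a j) (1 - D) * ⌊(k : ℝ) * xs j⌋ ≤ a j * xhat j := by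
    intro j hj
    rcases (ha0 j).eq_or_lt with haj | haj
    · simp [← haj, hβ.le]
    have hround : xhat j = ⌊(k : ℝ) * xs j⌋ := by
      refine (hxhat' j).trans (clippedFloor_of_lt_div hk fun m hdm => not_le.mp fun hmx => ?_)
      exact (mem_sdiff.mp hj).2 ((hF j).2 ⟨haj, m, hdm, hmx⟩)
    rw [hround]
    exact mul_le_mul_of_nonneg_right (min_le_left _ _)
      (by exact_mod_cast Int.floor_nonneg.mpr (mul_nonneg (Nat.cast_nonneg k) (hxs0 j)))
  have hFsupp : F ⊆ univ.filter (fun j => a j ≠ 0) := fun j hj => by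
    simpa using ((hF j).1 hj).1.ne'
  have hcard : #{j ∈ univ \ F | min (a j) (1 - D) ≠ 0} + 1 ≤ k := by
    refine (card_add_one_le_of_subset_sdiff (fun j hj => ?_) hFsupp hFne).trans hsparse
    simp only [mem_filter, mem_sdiff, mem_univ, true_and] at hj ⊢
    exact ⟨fun haj => hj.2 (by simp [haj, hβ.le]), hj.1⟩
  have hrest := le_sum_mul_floor_of_card_lt (univ \ F) (fun j => min (a j) (1 - D)) xs hβ.le
    (fun j _ => le_min (ha0 j) hβ.le) (fun j _ => min_le_right _ _) hcard hKC
  rw [← sum_sdiff (subset_univ F), hsumF]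
  linarith [sum_le_sum hoff]

open Classical in
theorem stmt_11 (n k : ℕ) (hk : 0 < k)
    (a : Fin n → ℝ) (ha0 : ∀ j, 0 ≤ a j) (ha1 : ∀ j, a j ≤ 1)
    (hsparse : (Finset.univ.filter (fun j => a j ≠ 0)).card ≤ k)
    (hround : ∀ x : Fin n → ℝ, (∀ j, 0 ≤ x j) → 1 ≤ ∑ j, a j * x j →
      1 ≤ ∑ j, a j * (⌊(k : ℝ) * x j⌋ : ℝ))
    (d : Fin n → WithTop ℕ)
    (xs : Fin n → ℝ) (hxs0 : ∀ j, 0 ≤ xs j)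
    (hxsd : ∀ j (m : ℕ), d j = (m : WithTop ℕ) → xs j ≤ (m : ℝ))
    (F : Finset (Fin n))
    (hF : ∀ j, j ∈ F ↔ (0 < a j ∧ ∃ m : ℕ, d j = (m : WithTop ℕ) ∧ (m : ℝ) / (k : ℝ) ≤ xs j))
    (hFne : F.Nonempty)
    (hFd : ∑ j ∈ F, a j * (((d j).untopD 0 : ℕ) : ℝ) < 1)
    (hKC : 1 - ∑ j ∈ F, a j * (((d j).untopD 0 : ℕ) : ℝ)
        ≤ ∑ j ∈ Finset.univ \ F,
            min (a j) (1 - ∑ j' ∈ F, a j' * (((d j').untopD 0 : ℕ) : ℝ)) * xs j)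
    (xhat : Fin n → ℝ)
    (hxhat : ∀ j, xhat j =
      if d j = ⊤ then (⌊(k : ℝ) * xs j⌋ : ℝ)
      else min (((d j).untopD 0 : ℕ) : ℝ) (⌊(k : ℝ) * xs j⌋ : ℝ)) :
    1 ≤ ∑ j, a j * xhat j :=
  stmt_11_general n k hk a ha0 hsparse d xs hxs0 F hF hFne hFd hKC xhat hxhat
end

section
/- Any nonnegative integral solution x of a covering integer program {Ax ≥ 1, 0 ≤ x ≤ d} satisfies every knapsack-cover inequality: for each row i and each F ⊆ supp(a_i) with Σ_{j∈F} A_{ij} d_j < 1, we have Σ_{j∉F} min(A_{ij}, 1 − Σ_{j'∈F} A_{ij'} d_{j'}) x_j ≥ 1 − Σ_{j∈F} A_{ij} d_j. -/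
/-!
Put `r = 1 - ∑_{j ∈ F} A i j * d j > 0`. Since `x ≤ d`, row `i` of `A x ≥ 1` leaves at least `r` to be
covered outside `F`. Truncating the coefficients at `r` cannot drop a sum of integer multiples below
`r`: either a single truncated coefficient `r` occurs with multiplicity `x j ≥ 1`, or no coefficient
that actually occurs is truncated and the sum is unchanged.
-/

open Finset

theorem le_sum_min_mul_of_le_sum_mul {ι R : Type*} [CommRing R] [LinearOrder R]
    [IsStrictOrderedRing R] {s : Finset ι} {a : ι → R} {x : ι → ℕ} {r : R}
    (ha : ∀ j ∈ s, 0 ≤ a j) (hr : 0 ≤ r) (hsum : r ≤ ∑ j ∈ s, a j * x j) :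
    r ≤ ∑ j ∈ s, min (a j) r * x j := by
  by_cases htrunc : ∃ j ∈ s, x j ≠ 0 ∧ r ≤ a j
  · obtain ⟨j, hj, hxj, hrj⟩ := htrunc
    have hterm : r ≤ min (a j) r * x j := by
      rw [min_eq_right hrj]
      exact le_mul_of_one_le_right hr (Nat.one_le_cast.mpr (Nat.one_le_iff_ne_zero.mpr hxj))
    exact hterm.trans <| single_le_sum
      (fun k hk => mul_nonneg (le_min (ha k hk) hr) (Nat.cast_nonneg _)) hj
  · push Not at htrunc
    have huntrunc : ∀ j ∈ s, min (a j) r * x j = a j * x j := by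
      intro j hj
      by_cases hxj : x j = 0
      · simp [hxj]
      · rw [min_eq_left (htrunc j hj hxj).le]
    rwa [sum_congr rfl huntrunc]

theorem stmt_12_general (m n : ℕ) (A : Fin m → Fin n → ℝ) (hA : ∀ i j, 0 ≤ A i j)
    (d : Fin n → WithTop ℕ) (x : Fin n → ℕ)
    (hxd : ∀ j, (x j : WithTop ℕ) ≤ d j)
    (hcov : ∀ i, 1 ≤ ∑ j, A i j * (x j : ℝ))
    (i : Fin m) (F : Finset (Fin n))
    (hFfin : ∀ j ∈ F, d j ≠ ⊤)
    (hFd : ∑ j ∈ F, A i j * ((WithTop.untopD 0 (d j) : ℕ) : ℝ) < 1) :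
    1 - ∑ j ∈ F, A i j * ((WithTop.untopD 0 (d j) : ℕ) : ℝ)
      ≤ ∑ j ∈ Finset.univ \ F,
          min (A i j) (1 - ∑ j' ∈ F, A i j' * ((WithTop.untopD 0 (d j') : ℕ) : ℝ)) * (x j : ℝ) := by
  have hxF : ∑ j ∈ F, A i j * (x j : ℝ) ≤ ∑ j ∈ F, A i j * ((WithTop.untopD 0 (d j) : ℕ) : ℝ) := by
    refine sum_le_sum fun j hj => mul_le_mul_of_nonneg_left ?_ (hA i j)
    exact_mod_cast (WithTop.le_untopD_iff (by simp [hFfin j hj])).2 (hxd j)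
  have hsplit := sum_sdiff (f := fun j => A i j * (x j : ℝ)) (subset_univ F)
  refine le_sum_min_mul_of_le_sum_mul (fun j _ => hA i j) (by linarith) ?_
  linarith [hcov i]

theorem stmt_12 (m n : ℕ) (A : Fin m → Fin n → ℝ) (hA : ∀ i j, 0 ≤ A i j)
    (d : Fin n → WithTop ℕ) (x : Fin n → ℕ)
    (hxd : ∀ j, (x j : WithTop ℕ) ≤ d j)
    (hcov : ∀ i, 1 ≤ ∑ j, A i j * (x j : ℝ))
    (i : Fin m) (F : Finset (Fin n))
    (hFsupp : ∀ j ∈ F, 0 < A i j)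
    (hFfin : ∀ j ∈ F, d j ≠ ⊤)
    (hFd : ∑ j ∈ F, A i j * ((WithTop.untopD 0 (d j) : ℕ) : ℝ) < 1) :
    1 - ∑ j ∈ F, A i j * ((WithTop.untopD 0 (d j) : ℕ) : ℝ)
      ≤ ∑ j ∈ Finset.univ \ F,
          min (A i j) (1 - ∑ j' ∈ F, A i j' * ((WithTop.untopD 0 (d j') : ℕ) : ℝ)) * (x j : ℝ) :=
  stmt_12_general m n A hA d x hxd hcov i F hFfin hFd
end

section
/- Let A be a nonnegative m×n matrix with A_{ij} ≤ b_i for all i,j, let S be a set of entries (i,j) with A_{ij}>0 such that for each row i, |{j : (i,j) ∈ S}| ≤ k, and let x ∈ ℤ_{≥0}^n with x ≤ 1 (0-1 vector) satisfy A_{S→0} x ≤ b, where A_{S→0} is A with entries in S set to zero. If y ≤ x is a 0-1 vector such that no two indices j, j' ∈ supp(y) are in conflict (j, j' conflict at row i when A_{ij} > 0, A_{ij'} > 0, and at least one of (i,j), (i,j') ∈ S), then A y ≤ b. -/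
/-!
Fix a row `i`. If some special entry `(i, j₀)` lies in `supp y`, conflict-freeness forces
`A i j = 0` for every other `j ∈ supp y`, so the row load of `y` is the single entry
`A i j₀ ≤ b i`. Otherwise no special entry of row `i` meets `supp y`, and since `y ≤ x` the row
load of `y` is dominated by that of `x` in `A_{S→0}`, which is at most `b i` by assumption.
-/

open Finset

section RowLoad

variable {ι : Type*} [Fintype ι] {a : ι → ℝ}

theorem sum_mul_natCast_eq_of_forall_ne {y : ι → ℕ} (j₀ : ι)
    (h : ∀ j, j ≠ j₀ → y j ≠ 0 → a j = 0) :
    ∑ j, a j * (y j : ℝ) = a j₀ * y j₀ := by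
  refine sum_eq_single_of_mem j₀ (mem_univ _) fun j _ hj => ?_
  by_cases hy : y j = 0
  · simp [hy]
  · simp [h j hj hy]

theorem sum_mul_natCast_le_sum_ite_mul {x y : ι → ℕ} (ha : ∀ j, 0 ≤ a j)
    (special : ι → Prop) [DecidablePred special] (hyx : ∀ j, y j ≤ x j)
    (hy : ∀ j, y j ≠ 0 → ¬ special j) :
    ∑ j, a j * (y j : ℝ) ≤ ∑ j, (if special j then 0 else a j) * (x j : ℝ) := by
  refine sum_le_sum fun j _ => ?_
  by_cases hyj : y j = 0
  · rw [hyj, Nat.cast_zero, mul_zero]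
    split_ifs <;> positivity [ha j]
  · rw [if_neg (hy j hyj)]
    exact mul_le_mul_of_nonneg_left (by exact_mod_cast hyx j) (ha j)

end RowLoad

theorem stmt_15_general (m n : ℕ) (A : Fin m → Fin n → ℝ) (b : Fin m → ℝ)
    (hA : ∀ i j, 0 ≤ A i j) (hAb : ∀ i j, A i j ≤ b i)
    (S : Finset (Fin m × Fin n)) (hS : ∀ p ∈ S, 0 < A p.1 p.2)
    (x y : Fin n → ℕ) (hx01 : ∀ j, x j ≤ 1)
    (hxfeas : ∀ i, ∑ j, (if (i, j) ∈ S then 0 else A i j) * (x j : ℝ) ≤ b i)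
    (hyx : ∀ j, y j ≤ x j)
    (hconf : ∀ j j' : Fin n, j ≠ j' → y j = 1 → y j' = 1 →
      ∀ i, ¬ (0 < A i j ∧ 0 < A i j' ∧ ((i, j) ∈ S ∨ (i, j') ∈ S))) :
    ∀ i, ∑ j, A i j * (y j : ℝ) ≤ b i := by
  intro i
  have hy_one : ∀ j, y j ≠ 0 → y j = 1 := fun j hj => by
    have := (hyx j).trans (hx01 j)
    omega
  by_cases hspecial : ∃ j₀, y j₀ = 1 ∧ (i, j₀) ∈ S
  · obtain ⟨j₀, hyj₀, hj₀S⟩ := hspecial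
    have hzero : ∀ j, j ≠ j₀ → y j ≠ 0 → A i j = 0 := fun j hj hyj =>
      le_antisymm (not_lt.1 fun hpos =>
        hconf j j₀ hj (hy_one j hyj) hyj₀ i ⟨hpos, hS _ hj₀S, Or.inr hj₀S⟩) (hA i j)
    rw [sum_mul_natCast_eq_of_forall_ne j₀ hzero, hyj₀, Nat.cast_one, mul_one]
    exact hAb i j₀
  · push Not at hspecial
    exact (sum_mul_natCast_le_sum_ite_mul (hA i) (fun j => (i, j) ∈ S) hyx
      fun j hyj => hspecial j (hy_one j hyj)).trans (hxfeas i)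

theorem stmt_15 (m n k : ℕ) (A : Fin m → Fin n → ℝ) (b : Fin m → ℝ)
    (hA : ∀ i j, 0 ≤ A i j) (hb : ∀ i, 0 ≤ b i) (hAb : ∀ i j, A i j ≤ b i)
    (S : Finset (Fin m × Fin n)) (hS : ∀ p ∈ S, 0 < A p.1 p.2)
    (hSrow : ∀ i, (S.filter (fun p => p.1 = i)).card ≤ k)
    (x y : Fin n → ℕ) (hx01 : ∀ j, x j ≤ 1)
    (hxfeas : ∀ i, ∑ j, (if (i, j) ∈ S then 0 else A i j) * (x j : ℝ) ≤ b i)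
    (hyx : ∀ j, y j ≤ x j)
    (hconf : ∀ j j' : Fin n, j ≠ j' → y j = 1 → y j' = 1 →
      ∀ i, ¬ (0 < A i j ∧ 0 < A i j' ∧ ((i, j) ∈ S ∨ (i, j') ∈ S))) :
    ∀ i, ∑ j, A i j * (y j : ℝ) ≤ b i :=
  stmt_15_general m n A b hA hAb S hS x y hx01 hxfeas hyx hconf
end

section
/- If A is a nonnegative m×n matrix with at most k nonzeros per row and every entry of A is at most 1/W with W ≥ 1 and b = 1 (all-ones), then every row constraint a_i·x ≥ 1 is (1 + k/W)-roundable: a_i·x ≥ 1 implies a_i·⌊(1+k/W)x⌋ ≥ 1 for all nonnegative real x. -/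
/-!
Since `⌊y⌋ > y - 1`, scaling by `c = 1 + ∑ α` before rounding down loses at most `∑ α` from
`∑ α_j (c x_j) ≥ c`, which leaves at least `1`. For a row of `A` the coefficient sum is at most
`k / W`, and rounding after a larger scaling of a nonnegative `x` can only help.
-/

open Finset

def IsRoundable {ι : Type*} [Fintype ι] (α : ι → ℝ) (c : ℝ) : Prop :=
  ∀ x : ι → ℝ, (∀ j, 0 ≤ x j) → 1 ≤ ∑ j, α j * x j → 1 ≤ ∑ j, α j * (⌊c * x j⌋ : ℝ)

section Roundable

variable {ι : Type*} [Fintype ι] {α : ι → ℝ}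

theorem isRoundable_one_add_sum (hα : ∀ j, 0 ≤ α j) : IsRoundable α (1 + ∑ j, α j) := by
  intro x _ hx
  set c := 1 + ∑ j, α j
  have hc : 0 ≤ c := add_nonneg zero_le_one (Finset.sum_nonneg fun j _ => hα j)
  calc (1 : ℝ) = c * 1 - ∑ j, α j := by ring
    _ ≤ c * ∑ j, α j * x j - ∑ j, α j := by gcongr
    _ = ∑ j, α j * (c * x j - 1) := by
        rw [Finset.mul_sum, ← Finset.sum_sub_distrib]
        exact Finset.sum_congr rfl fun j _ => by ring
    _ ≤ ∑ j, α j * (⌊c * x j⌋ : ℝ) :=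
        Finset.sum_le_sum fun j _ =>
          mul_le_mul_of_nonneg_left (Int.sub_one_lt_floor _).le (hα j)

theorem IsRoundable.mono {c c' : ℝ} (h : IsRoundable α c) (hα : ∀ j, 0 ≤ α j)
    (hcc' : c ≤ c') : IsRoundable α c' := by
  intro x hx hαx
  refine (h x hx hαx).trans (Finset.sum_le_sum fun j _ => ?_)
  gcongr
  · exact hα j
  · exact hx j

end Roundable

open Classical in
theorem sum_le_card_support_mul {ι : Type*} [Fintype ι] {a : ι → ℝ} {k : ℕ} {B : ℝ}
    (hB : 0 ≤ B) (ha : ∀ j, a j ≤ B) (hk : (univ.filter fun j => a j ≠ 0).card ≤ k) :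
    ∑ j, a j ≤ k * B := by
  rw [← Finset.sum_filter_ne_zero]
  calc ∑ j ∈ univ.filter (fun j => a j ≠ 0), a j
      ≤ (univ.filter fun j => a j ≠ 0).card * B := by
        simpa only [nsmul_eq_mul] using Finset.sum_le_card_nsmul _ _ _ fun j _ => ha j
    _ ≤ k * B := by gcongr

open Classical in
theorem stmt_18 (m n k : ℕ) (W : ℝ) (hW : 1 ≤ W)
    (A : Fin m → Fin n → ℝ) (hA0 : ∀ i j, 0 ≤ A i j)
    (hAW : ∀ i j, A i j ≤ 1 / W)
    (hrow : ∀ i, (Finset.univ.filter (fun j => A i j ≠ 0)).card ≤ k) :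
    ∀ i, ∀ x : Fin n → ℝ, (∀ j, 0 ≤ x j) → 1 ≤ ∑ j, A i j * x j →
      1 ≤ ∑ j, A i j * (⌊(1 + (k : ℝ) / W) * x j⌋ : ℝ) := by
  intro i
  have hrowsum : ∑ j, A i j ≤ k / W := by
    simpa only [mul_one_div] using
      sum_le_card_support_mul (by positivity) (hAW i) (hrow i)
  exact (isRoundable_one_add_sum (hA0 i)).mono (hA0 i) (by linarith)
end
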